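/- arXiv:2402.01382 — 2 statements merged into one kernel-verified Lean document; each statement's English description precedes it below -/
import Mathlib

section
/- Let n, B be positive integers, γ > 0, δ ≥ 0, and let λ1 ≥ λ2 ≥ … ≥ λ_d > 0. Define η_*(γ, B, δ, λ1) := 1 + 2nB(λ1² + nδ)/(γλ1⁴) − (Σ_{i=2}^d λ_i²)/λ1² and γ̄ := 2nB(λ1² + nδ)/(λ1² Σ_{i=1}^d λ_i²). Then η_* is strictly increasing in δ and in B, strictly decreasing in γ; moreover, if γ < γ̄ (with λ2, …, λ_d held fixed), then η_* is strictly decreasing in λ1. -/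
open Finset

/-- Lower tail-index bound `η_* = 1 + 2nB(λ1² + nδ)/(γ λ1⁴) − S/λ1²`, where `S = Σ_{i=2}^d λ_i²`. -/
noncomputable def etaLow (n B : ℕ) (γ δ lam1 S : ℝ) : ℝ :=
  1 + 2 * n * B * (lam1 ^ 2 + n * δ) / (γ * lam1 ^ 4) - S / lam1 ^ 2

/-- Critical learning rate `γ̄ = 2nB(λ1² + nδ)/(λ1² T)`, where `T = Σ_{i=1}^d λ_i²`. -/
noncomputable def gammaBar (n B : ℕ) (δ lam1 T : ℝ) : ℝ :=
  2 * n * B * (lam1 ^ 2 + n * δ) / (lam1 ^ 2 * T)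

/-! In the variable `u = λ1⁻²` and with `c = 2nB/γ`, `η_* = 1 + (c - S) u + c nδ u²`; the
monotonicity in `δ`, `B` and `γ` is read off the defining formula. The condition `γ < γ̄` at `λ1`
is equivalent to `λ1² < c - S + c nδ u`, so `c - S + c nδ u > 0`; as `c nδ ≥ 0` and `u > 0`, the
quadratic is then increasing to the right of `u`, while `λ1 ↦ λ1⁻²` is decreasing. -/

theorem quadratic_lt_quadratic {a b u v : ℝ} (hb : 0 ≤ b) (hv : 0 ≤ v) (hslope : 0 < a + b * v)
    (hvu : v < u) : a * v + b * v ^ 2 < a * u + b * u ^ 2 := by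
  have hfactor : a * u + b * u ^ 2 - (a * v + b * v ^ 2) = (u - v) * (a + b * v + b * u) := by
    ring
  have hbu : 0 ≤ b * u := mul_nonneg hb (hv.trans hvu.le)
  have : 0 < (u - v) * (a + b * v + b * u) := mul_pos (sub_pos.mpr hvu) (by linarith)
  linarith

section

variable {n B : ℕ} {γ δ x S : ℝ}

theorem etaLow_strictMono_delta (hn : 0 < n) (hB : 0 < B) (hγ : 0 < γ) (hx : x ≠ 0) :
    StrictMono fun δ => etaLow n B γ δ x S := by
  intro δ δ' hδ
  simp only [etaLow]
  gcongr

theorem etaLow_strictMono_batch (hn : 0 < n) (hγ : 0 < γ) (hδ : 0 ≤ δ) (hx : x ≠ 0) :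
    StrictMono fun B : ℕ => etaLow n B γ δ x S := by
  intro B B' hB
  simp only [etaLow]
  gcongr

theorem etaLow_strictAntiOn_gamma (hn : 0 < n) (hB : 0 < B) (hδ : 0 ≤ δ) (hx : x ≠ 0) :
    StrictAntiOn (fun γ => etaLow n B γ δ x S) (Set.Ioi 0) := by
  intro γ (hγ : 0 < γ) γ' _ hlt
  simp only [etaLow]
  gcongr

theorem etaLow_eq_quadratic_inv_sq (hx : x ≠ 0) :
    etaLow n B γ δ x S =
      1 + ((2 * n * B / γ - S) * (x ^ 2)⁻¹ + 2 * n * B / γ * (n * δ) * ((x ^ 2)⁻¹) ^ 2) := by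
  unfold etaLow
  field_simp
  ring

theorem lt_gammaBar_iff (hγ : 0 < γ) (hx : x ≠ 0) (hS : 0 ≤ S) :
    γ < gammaBar n B δ x (x ^ 2 + S) ↔
      x ^ 2 < 2 * n * B / γ - S + 2 * n * B / γ * (n * δ) * (x ^ 2)⁻¹ := by
  have hx2 : 0 < x ^ 2 := by positivity
  have hrhs : 2 * n * B / γ - S + 2 * n * B / γ * (n * δ) * (x ^ 2)⁻¹ =
      (2 * n * B * (x ^ 2 + n * δ) - γ * S * x ^ 2) / (γ * x ^ 2) := by
    field_simp
    ring
  unfold gammaBar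
  rw [hrhs, lt_div_iff₀ (by positivity), lt_div_iff₀ (by positivity)]
  constructor <;> intro h <;> linarith

theorem etaLow_lt_etaLow_of_lt_gammaBar {y : ℝ} (hγ : 0 < γ) (hδ : 0 ≤ δ) (hS : 0 ≤ S)
    (hx : 0 < x) (hxy : x < y) (hγbar : γ < gammaBar n B δ y (y ^ 2 + S)) :
    etaLow n B γ δ y S < etaLow n B γ δ x S := by
  have hy : 0 < y := hx.trans hxy
  rw [lt_gammaBar_iff hγ hy.ne' hS] at hγbar
  rw [etaLow_eq_quadratic_inv_sq hx.ne', etaLow_eq_quadratic_inv_sq hy.ne']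
  gcongr 1 + ?_
  refine quadratic_lt_quadratic (by positivity) (by positivity) (by nlinarith) ?_
  gcongr

end

theorem tail_index_lower_bound_monotonicity_general (n d : ℕ) (hn : 0 < n) (hd : 0 < d)
    (lam : Fin d → ℝ) (hpos : ∀ i, 0 < lam i) :
    -- strictly increasing in the regularization parameter δ
    (∀ (B : ℕ) (γ δ δ' : ℝ), 0 < B → 0 < γ → 0 ≤ δ → δ < δ' →
      etaLow n B γ δ (lam ⟨0, hd⟩) (∑ i ∈ univ.erase ⟨0, hd⟩, lam i ^ 2) <
        etaLow n B γ δ' (lam ⟨0, hd⟩) (∑ i ∈ univ.erase ⟨0, hd⟩, lam i ^ 2)) ∧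
    -- strictly increasing in the batch size B
    (∀ (B B' : ℕ) (γ δ : ℝ), 0 < B → B < B' → 0 < γ → 0 ≤ δ →
      etaLow n B γ δ (lam ⟨0, hd⟩) (∑ i ∈ univ.erase ⟨0, hd⟩, lam i ^ 2) <
        etaLow n B' γ δ (lam ⟨0, hd⟩) (∑ i ∈ univ.erase ⟨0, hd⟩, lam i ^ 2)) ∧
    -- strictly decreasing in the learning rate γ
    (∀ (B : ℕ) (γ γ' δ : ℝ), 0 < B → 0 < γ → γ < γ' → 0 ≤ δ →
      etaLow n B γ' δ (lam ⟨0, hd⟩) (∑ i ∈ univ.erase ⟨0, hd⟩, lam i ^ 2) <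
        etaLow n B γ δ (lam ⟨0, hd⟩) (∑ i ∈ univ.erase ⟨0, hd⟩, lam i ^ 2)) ∧
    -- strictly decreasing in λ1, with λ2, …, λ_d held fixed, provided γ < γ̄
    (∀ (B : ℕ) (γ δ mu mu' : ℝ), 0 < B → 0 < γ → 0 ≤ δ → 0 < mu →
      (∀ i : Fin d, 0 < i.1 → lam i ≤ mu) → mu < mu' →
      γ < gammaBar n B δ mu (mu ^ 2 + ∑ i ∈ univ.erase ⟨0, hd⟩, lam i ^ 2) →
      γ < gammaBar n B δ mu' (mu' ^ 2 + ∑ i ∈ univ.erase ⟨0, hd⟩, lam i ^ 2) →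
      etaLow n B γ δ mu' (∑ i ∈ univ.erase ⟨0, hd⟩, lam i ^ 2) <
        etaLow n B γ δ mu (∑ i ∈ univ.erase ⟨0, hd⟩, lam i ^ 2)) := by
  have hlam0 : lam ⟨0, hd⟩ ≠ 0 := (hpos _).ne'
  have hS : 0 ≤ ∑ i ∈ univ.erase ⟨0, hd⟩, lam i ^ 2 := sum_nonneg fun i _ => sq_nonneg (lam i)
  refine ⟨?_, ?_, ?_, ?_⟩
  · intro B γ δ δ' hB hγ _ hδδ'
    exact etaLow_strictMono_delta hn hB hγ hlam0 hδδ'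
  · intro B B' γ δ _ hBB' hγ hδ
    exact etaLow_strictMono_batch hn hγ hδ hlam0 hBB'
  · intro B γ γ' δ hB hγ hγγ' hδ
    exact etaLow_strictAntiOn_gamma hn hB hδ hlam0 hγ (hγ.trans hγγ') hγγ'
  · intro B γ δ mu mu' _ hγ hδ hmu _ hmumu' _ hγbar
    exact etaLow_lt_etaLow_of_lt_gammaBar hγ hδ hS hmu hmumu' hγbar

theorem tail_index_lower_bound_monotonicity (n d : ℕ) (hn : 0 < n) (hd : 0 < d)
    (lam : Fin d → ℝ) (hpos : ∀ i, 0 < lam i)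
    (hdec : ∀ i j : Fin d, i ≤ j → lam j ≤ lam i) :
    -- strictly increasing in the regularization parameter δ
    (∀ (B : ℕ) (γ δ δ' : ℝ), 0 < B → 0 < γ → 0 ≤ δ → δ < δ' →
      etaLow n B γ δ (lam ⟨0, hd⟩) (∑ i ∈ univ.erase ⟨0, hd⟩, lam i ^ 2) <
        etaLow n B γ δ' (lam ⟨0, hd⟩) (∑ i ∈ univ.erase ⟨0, hd⟩, lam i ^ 2)) ∧
    -- strictly increasing in the batch size B
    (∀ (B B' : ℕ) (γ δ : ℝ), 0 < B → B < B' → 0 < γ → 0 ≤ δ →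
      etaLow n B γ δ (lam ⟨0, hd⟩) (∑ i ∈ univ.erase ⟨0, hd⟩, lam i ^ 2) <
        etaLow n B' γ δ (lam ⟨0, hd⟩) (∑ i ∈ univ.erase ⟨0, hd⟩, lam i ^ 2)) ∧
    -- strictly decreasing in the learning rate γ
    (∀ (B : ℕ) (γ γ' δ : ℝ), 0 < B → 0 < γ → γ < γ' → 0 ≤ δ →
      etaLow n B γ' δ (lam ⟨0, hd⟩) (∑ i ∈ univ.erase ⟨0, hd⟩, lam i ^ 2) <
        etaLow n B γ δ (lam ⟨0, hd⟩) (∑ i ∈ univ.erase ⟨0, hd⟩, lam i ^ 2)) ∧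
    -- strictly decreasing in λ1, with λ2, …, λ_d held fixed, provided γ < γ̄
    (∀ (B : ℕ) (γ δ mu mu' : ℝ), 0 < B → 0 < γ → 0 ≤ δ → 0 < mu →
      (∀ i : Fin d, 0 < i.1 → lam i ≤ mu) → mu < mu' →
      γ < gammaBar n B δ mu (mu ^ 2 + ∑ i ∈ univ.erase ⟨0, hd⟩, lam i ^ 2) →
      γ < gammaBar n B δ mu' (mu' ^ 2 + ∑ i ∈ univ.erase ⟨0, hd⟩, lam i ^ 2) →
      etaLow n B γ δ mu' (∑ i ∈ univ.erase ⟨0, hd⟩, lam i ^ 2) <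
        etaLow n B γ δ mu (∑ i ∈ univ.erase ⟨0, hd⟩, lam i ^ 2)) :=
  tail_index_lower_bound_monotonicity_general n d hn hd lam hpos
end

section
/- Let θ > 0, a > 0, Δ > 0 and μ ∈ ℝ, and define b(z) := −θ(z − μ) and σ̂(z) := √(2θa(z² + 1)) for z ∈ ℝ. Let S₁, S₂ be integrable real random variables on a common probability space with E[S₂ | S₁] = S₁ almost surely, and let W be a centered Gaussian random variable with variance Δ, independent of (S₁, S₂). Then for every convex function h : ℝ → ℝ that is bounded below (or such that both expectations are well-defined in (−∞, ∞]), E[h(S₁ + Δ·b(S₁) + σ̂(S₁)·W)] ≤ E[h(S₂ + Δ·b(S₂) + σ̂(S₂)·W)]. -/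
/-!
Conditional Jensen turns the martingale coupling `𝔼[S₂ | S₁] = S₁` into the convex order
`S₁ ≤ S₂`. For convex `h`, the function `G s = 𝔼 h(A s + σ(s) W)` is again convex: since `W` is
symmetric, `2 G s = 𝔼 [h(A s + σ(s) W) + h(A s - σ(s) W)]`, and for each `w` this is convex in `s`
because `A` is affine, `σ` is convex and nonnegative, and `y ↦ h(x + y) + h(x - y)` is nondecreasing
on `y ≥ 0`. Independence of `W` gives `𝔼 h(A Sᵢ + σ(Sᵢ) W) = 𝔼 G(Sᵢ)`, so the convex order
passes from `S₁, S₂` to their Euler–Maruyama steps. For `G` to be finite, `h` is first replaced by the increasing Lipschitz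
convex functions `max(c, ℓ₀, …, ℓₙ)` built from affine minorants `ℓᵢ` of `h`, and monotone
convergence passes to the limit.
-/

open MeasureTheory ProbabilityTheory Set Filter Topology
open scoped NNReal ENNReal

theorem convexOn_sqrt_mul_sq_add_one (K : ℝ) : ConvexOn ℝ univ fun s : ℝ => √(K * (s ^ 2 + 1)) := by
  have hnorm : ConvexOn ℝ univ fun s : ℝ => ‖(s : ℂ) + Complex.I‖ :=
    convexOn_univ_norm.comp_affineMap
      (Complex.ofRealCLM.toLinearMap.toAffineMap + AffineMap.const ℝ ℝ Complex.I)
  have heq (s : ℝ) : √(K * (s ^ 2 + 1)) = √K • ‖(s : ℂ) + Complex.I‖ := by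
    have := Complex.norm_add_mul_I s 1
    rw [Complex.ofReal_one, one_mul, one_pow] at this
    rw [Real.sqrt_mul' K (by positivity), smul_eq_mul, this]
  simpa only [heq] using hnorm.smul (Real.sqrt_nonneg K)

theorem ConvexOn.monotoneOn_add_comp_sub {h : ℝ → ℝ} (hh : ConvexOn ℝ univ h) (x : ℝ) :
    MonotoneOn (fun y => h (x + y) + h (x - y)) (Ici 0) := by
  intro u hu v (hv : 0 ≤ v) huv
  obtain rfl | hv0 := hv.eq_or_lt
  · obtain rfl : u = 0 := le_antisymm huv hu
    rfl
  have hp : 0 ≤ (v + u) / (2 * v) := div_nonneg (by linarith [hu.out]) (by positivity)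
  have hq : 0 ≤ (v - u) / (2 * v) := div_nonneg (by linarith) (by positivity)
  have hpq : (v + u) / (2 * v) + (v - u) / (2 * v) = 1 := by field_simp; ring
  have h₁ := hh.2 (mem_univ (x + v)) (mem_univ (x - v)) hp hq hpq
  have h₂ := hh.2 (mem_univ (x + v)) (mem_univ (x - v)) hq hp (by linarith)
  have e₁ : (v + u) / (2 * v) * (x + v) + (v - u) / (2 * v) * (x - v) = x + u := by
    field_simp; ring
  have e₂ : (v - u) / (2 * v) * (x + v) + (v + u) / (2 * v) * (x - v) = x - u := by
    field_simp; ring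
  simp only [smul_eq_mul, e₁, e₂] at h₁ h₂
  linear_combination h₁ + h₂ + (h (x + v) + h (x - v)) * hpq

theorem ConvexOn.add_comp_affine_sub {h σ : ℝ → ℝ} (hh : ConvexOn ℝ univ h) (A : ℝ →ᵃ[ℝ] ℝ)
    (hσ : ConvexOn ℝ univ σ) (hσ₀ : ∀ s, 0 ≤ σ s) (w : ℝ) :
    ConvexOn ℝ univ fun s => h (A s + σ s * w) + h (A s - σ s * w) := by
  wlog hw : 0 ≤ w generalizing w
  · have := this (-w) (by linarith)
    simp only [mul_neg, sub_neg_eq_add, ← sub_eq_add_neg] at this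
    exact this.congr fun s _ => add_comm _ _
  refine ⟨convex_univ, fun s₁ _ s₂ _ a b ha hb hab => ?_⟩
  simp only [smul_eq_mul]
  have hA : A (a * s₁ + b * s₂) = a * A s₁ + b * A s₂ := Convex.combo_affine_apply hab
  have hσw : σ (a * s₁ + b * s₂) * w ≤ a * (σ s₁ * w) + b * (σ s₂ * w) := by
    have := mul_le_mul_of_nonneg_right (hσ.2 (mem_univ s₁) (mem_univ s₂) ha hb hab) hw
    simp only [smul_eq_mul] at this
    linarith
  have hmono := hh.monotoneOn_add_comp_sub (a * A s₁ + b * A s₂)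
    (mul_nonneg (hσ₀ _) hw) ((mul_nonneg (hσ₀ _) hw).trans hσw) hσw
  have hplus := hh.2 (mem_univ (A s₁ + σ s₁ * w)) (mem_univ (A s₂ + σ s₂ * w)) ha hb hab
  have hminus := hh.2 (mem_univ (A s₁ - σ s₁ * w)) (mem_univ (A s₂ - σ s₂ * w)) ha hb hab
  simp only [smul_eq_mul] at hplus hminus
  rw [show a * (A s₁ + σ s₁ * w) + b * (A s₂ + σ s₂ * w)
      = a * A s₁ + b * A s₂ + (a * (σ s₁ * w) + b * (σ s₂ * w)) by ring] at hplus
  rw [show a * (A s₁ - σ s₁ * w) + b * (A s₂ - σ s₂ * w)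
      = a * A s₁ + b * A s₂ - (a * (σ s₁ * w) + b * (σ s₂ * w)) by ring] at hminus
  rw [hA]
  linarith [hmono]

theorem ConvexOn.exists_lipschitz_tendsto {h : ℝ → ℝ} (hh : ConvexOn ℝ univ h) {c : ℝ}
    (hc : ∀ x, c ≤ h x) :
    ∃ g : ℕ → ℝ → ℝ, Monotone g ∧ (∀ n, ConvexOn ℝ univ (g n)) ∧
      (∀ n, ∃ K, LipschitzWith K (g n)) ∧ (∀ n x, c ≤ g n x) ∧ (∀ n, g n ≤ h) ∧
      ∀ x, Tendsto (g · x) atTop (𝓝 (h x)) := by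
  obtain ⟨l, b, hle, hsup⟩ := hh.real_univ_sSup_of_nat_affine_eq
    (continuousOn_univ.1 (hh.continuousOn isOpen_univ)).lowerSemicontinuous
  set ℓ : ℕ → ℝ → ℝ := fun i => l i + Function.const ℝ (b i)
  have hsucc (n : ℕ) : partialSups ℓ (n + 1) = partialSups ℓ n ⊔ ℓ (n + 1) := partialSups_succ ℓ n
  have hgh (n : ℕ) : Function.const ℝ c ⊔ partialSups ℓ n ≤ h :=
    sup_le hc (partialSups_le _ _ _ fun i _ => hle i)
  refine ⟨fun n => Function.const ℝ c ⊔ partialSups ℓ n,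
    fun m n hmn => sup_le_sup_left (partialSups_monotone ℓ hmn) _, fun n => ?_, fun n => ?_,
    fun n x => le_sup_left (a := c), hgh, fun x => ?_⟩
  · have hℓ (i : ℕ) : ConvexOn ℝ univ (ℓ i) :=
      ((l i).toLinearMap.convexOn convex_univ).add_const (b i)
    refine (convexOn_const c convex_univ).sup ?_
    induction n with
    | zero => exact hℓ 0
    | succ n ih => exact hsucc n ▸ ih.sup (hℓ _)
  · have hℓ (i : ℕ) : ∃ K, LipschitzWith K (ℓ i) :=
      ⟨_, (l i).lipschitz.add (LipschitzWith.const (b i))⟩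
    obtain ⟨K, hK⟩ : ∃ K, LipschitzWith K (partialSups ℓ n) := by
      induction n with
      | zero => exact hℓ 0
      | succ n ih =>
        obtain ⟨K, hK⟩ := ih
        obtain ⟨K', hK'⟩ := hℓ (n + 1)
        rw [hsucc]
        exact ⟨_, hK.max hK'⟩
    exact ⟨_, (LipschitzWith.const c).max hK⟩
  · have hx : h x = ⨆ i, ℓ i x := by rw [← hsup, iSup_apply]
    refine tendsto_order.2 ⟨fun a ha => ?_, fun a ha => Eventually.of_forall fun n =>
      (hgh n x).trans_lt ha⟩
    obtain ⟨i, hi⟩ := exists_lt_of_lt_ciSup (hx ▸ ha)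
    filter_upwards [eventually_ge_atTop i] with n hn
    exact hi.trans_le ((le_partialSups_of_le ℓ hn x).trans le_sup_right)

theorem LipschitzWith.integrable_comp {α E F : Type*} [MeasurableSpace α] {μ : Measure α}
    [IsFiniteMeasure μ] [NormedAddCommGroup E] [NormedAddCommGroup F] {K : ℝ≥0} {g : E → F}
    {f : α → E} (hg : LipschitzWith K g) (hf : Integrable f μ) :
    Integrable (fun x => g (f x)) μ := by
  have h₀ : MemLp ((fun y => g y - g 0) ∘ f) 1 μ :=
    (hg.sub (LipschitzWith.const (g 0))).comp_memLp (sub_self _) (memLp_one_iff_integrable.2 hf)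
  refine ((memLp_one_iff_integrable.1 h₀).add (integrable_const (g 0))).congr (ae_of_all _ ?_)
  simp

theorem convexOn_parametric_integral {E α : Type*} [AddCommGroup E] [Module ℝ E] {s : Set E}
    [MeasurableSpace α] {ν : Measure α} {F : E → α → ℝ} (hs : Convex ℝ s)
    (hF : ∀ᵐ w ∂ν, ConvexOn ℝ s (F · w)) (hint : ∀ x ∈ s, Integrable (F x) ν) :
    ConvexOn ℝ s fun x => ∫ w, F x w ∂ν := by
  refine ⟨hs, fun x hx y hy a b ha hb hab => ?_⟩
  calc ∫ w, F (a • x + b • y) w ∂ν ≤ ∫ w, (a * F x w + b * F y w) ∂ν :=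
        integral_mono_ae (hint _ (hs hx hy ha hb hab))
          (((hint x hx).const_mul a).add ((hint y hy).const_mul b))
          (hF.mono fun w hw => hw.2 hx hy ha hb hab)
    _ = a • ∫ w, F x w ∂ν + b • ∫ w, F y w ∂ν := by
        rw [integral_add ((hint x hx).const_mul a) ((hint y hy).const_mul b),
          integral_const_mul, integral_const_mul, smul_eq_mul, smul_eq_mul]

theorem ConvexOn.integral_comp_affine_add_mul {h σ : ℝ → ℝ} (hh : ConvexOn ℝ univ h)
    (A : ℝ →ᵃ[ℝ] ℝ) (hσ : ConvexOn ℝ univ σ) (hσ₀ : ∀ s, 0 ≤ σ s) {ν : Measure ℝ}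
    [ν.IsNegInvariant] (hint : ∀ x y, Integrable (fun w => h (x + y * w)) ν) :
    ConvexOn ℝ univ fun s => ∫ w, h (A s + σ s * w) ∂ν := by
  have hint' (x y : ℝ) : Integrable (fun w => h (x - y * w)) ν := by
    simpa only [mul_neg, ← sub_eq_add_neg] using (hint x y).comp_neg
  have hsymm (s : ℝ) : ∫ w, h (A s + σ s * w) ∂ν
      = 2⁻¹ * ∫ w, (h (A s + σ s * w) + h (A s - σ s * w)) ∂ν := by
    have := integral_neg_eq_self (fun w => h (A s + σ s * w)) ν
    simp only [mul_neg, ← sub_eq_add_neg] at this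
    rw [integral_add (hint _ _) (hint' _ _), this]
    ring
  simp_rw [hsymm]
  exact (convexOn_parametric_integral convex_univ
    (ae_of_all _ (hh.add_comp_affine_sub A hσ hσ₀))
    fun s _ => (hint _ _).add (hint' _ _)).smul (by norm_num)

instance (v : ℝ≥0) : (gaussianReal 0 v).IsNegInvariant :=
  ⟨by rw [Measure.neg_def, gaussianReal_map_neg, neg_zero]⟩

theorem lintegral_ofReal_sub_eq_ofReal_integral_sub {α : Type*} [MeasurableSpace α] {μ : Measure α}
    [IsProbabilityMeasure μ] {f : α → ℝ} {c : ℝ} (hf : Integrable f μ) (hc : ∀ᵐ x ∂μ, c ≤ f x) :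
    ∫⁻ x, ENNReal.ofReal (f x - c) ∂μ = ENNReal.ofReal (∫ x, f x ∂μ - c) := by
  have hfc : Integrable (fun x => f x - c) μ := hf.sub (integrable_const c)
  rw [← ofReal_integral_eq_lintegral_ofReal hfc (hc.mono fun x => sub_nonneg.2),
    integral_sub hf (integrable_const c), integral_const, probReal_univ, one_smul]

theorem ProbabilityTheory.IndepFun.lintegral_ofReal_sub_comp {Ω α β : Type*}
    [MeasurableSpace Ω] [MeasurableSpace α] [MeasurableSpace β] {P : Measure Ω}
    [IsProbabilityMeasure P] {X : Ω → α} {Y : Ω → β}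
    (hXY : IndepFun X Y P) (hX : Measurable X) (hY : Measurable Y) {F : α → β → ℝ} {c : ℝ}
    (hF : Measurable (Function.uncurry F)) (hint : ∀ x, Integrable (F x) (P.map Y))
    (hc : ∀ x y, c ≤ F x y) :
    ∫⁻ ω, ENNReal.ofReal (F (X ω) (Y ω) - c) ∂P
      = ∫⁻ ω, ENNReal.ofReal (∫ y, F (X ω) y ∂(P.map Y) - c) ∂P := by
  have : IsProbabilityMeasure (P.map Y) := Measure.isProbabilityMeasure_map hY.aemeasurable
  have hG : Measurable fun p : α × β => ENNReal.ofReal (F p.1 p.2 - c) :=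
    (hF.sub_const c).ennreal_ofReal
  calc ∫⁻ ω, ENNReal.ofReal (F (X ω) (Y ω) - c) ∂P
      = ∫⁻ p, ENNReal.ofReal (F p.1 p.2 - c) ∂((P.map X).prod (P.map Y)) := by
        rw [← (indepFun_iff_map_prod_eq_prod_map_map hX.aemeasurable hY.aemeasurable).1 hXY,
          lintegral_map hG (hX.prodMk hY)]
    _ = ∫⁻ ω, ∫⁻ y, ENNReal.ofReal (F (X ω) y - c) ∂(P.map Y) ∂P := by
        rw [lintegral_prod _ hG.aemeasurable, lintegral_map hG.lintegral_prod_right' hX]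
    _ = _ := by
        simp_rw [lintegral_ofReal_sub_eq_ofReal_integral_sub (hint _) (ae_of_all _ (hc _))]

theorem lintegral_ofReal_sub_le_of_tendsto {Ω : Type*} [MeasurableSpace Ω] {P : Measure Ω}
    {g : ℕ → ℝ → ℝ} {h : ℝ → ℝ} {c : ℝ} {X Y : Ω → ℝ} (hX : AEMeasurable X P) (hg : Monotone g)
    (hgc : ∀ n, Continuous (g n)) (hgh : ∀ n, g n ≤ h)
    (hlim : ∀ x, Tendsto (g · x) atTop (𝓝 (h x)))
    (hle : ∀ n, ∫⁻ ω, ENNReal.ofReal (g n (X ω) - c) ∂P ≤ ∫⁻ ω, ENNReal.ofReal (g n (Y ω) - c) ∂P) :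
    ∫⁻ ω, ENNReal.ofReal (h (X ω) - c) ∂P ≤ ∫⁻ ω, ENNReal.ofReal (h (Y ω) - c) ∂P := by
  have hconv := lintegral_tendsto_of_tendsto_of_monotone
    (f := fun n ω => ENNReal.ofReal (g n (X ω) - c))
    (fun n => (((hgc n).measurable.comp_aemeasurable hX).sub_const c).ennreal_ofReal)
    (ae_of_all _ fun ω m n hmn => ENNReal.ofReal_le_ofReal (sub_le_sub_right (hg hmn _) c))
    (ae_of_all _ fun ω => ENNReal.tendsto_ofReal ((hlim _).sub_const c))
  exact le_of_tendsto' hconv fun n => (hle n).trans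
    (lintegral_mono fun ω => ENNReal.ofReal_le_ofReal (sub_le_sub_right (hgh n _) c))

/-- `𝔼 h(X) ≤ 𝔼 h(Y)` in `(-∞, ∞]` for every convex `h` bounded below, each expectation being
computed as `c + ∫⁻ (h - c)` for a lower bound `c` of `h`. -/
def ConvexOrderLE {Ω E : Type*} [MeasurableSpace Ω] [AddCommMonoid E] [SMul ℝ E]
    (P : Measure Ω) (X Y : Ω → E) : Prop :=
  ∀ h : E → ℝ, ConvexOn ℝ univ h → ∀ c : ℝ, (∀ x, c ≤ h x) →
    ∫⁻ ω, ENNReal.ofReal (h (X ω) - c) ∂P ≤ ∫⁻ ω, ENNReal.ofReal (h (Y ω) - c) ∂P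

theorem convexOrderLE_of_condExp_ae_eq {Ω E : Type*} {m mΩ : MeasurableSpace Ω}
    [NormedAddCommGroup E] [NormedSpace ℝ E] [FiniteDimensional ℝ E] {P : Measure Ω}
    [IsProbabilityMeasure P] (hm : m ≤ mΩ) {X Y : Ω → E} (hY : Integrable Y P)
    (hXY : P[Y | m] =ᵐ[P] X) : ConvexOrderLE P X Y := by
  intro h hh c hc
  by_cases hhY : Integrable (h ∘ Y) P
  · have hjensen := hh.map_condExp_le_of_finiteDimensional hm hY hhY
    have hc' : ∀ᵐ ω ∂P, c ≤ P[h ∘ Y | m] ω := hjensen.mono fun ω hω => (hc _).trans hω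
    calc ∫⁻ ω, ENNReal.ofReal (h (X ω) - c) ∂P
        ≤ ∫⁻ ω, ENNReal.ofReal (P[h ∘ Y | m] ω - c) ∂P := by
          refine lintegral_mono_ae ((hjensen.and hXY).mono fun ω ⟨hω, hXω⟩ => ?_)
          rw [← hXω]
          exact ENNReal.ofReal_le_ofReal (sub_le_sub_right hω c)
      _ = ∫⁻ ω, ENNReal.ofReal (h (Y ω) - c) ∂P := by
          rw [lintegral_ofReal_sub_eq_ofReal_integral_sub integrable_condExp hc',
            integral_condExp hm]
          exact (lintegral_ofReal_sub_eq_ofReal_integral_sub hhY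
            (ae_of_all _ fun ω => hc (Y ω))).symm
  · suffices ∫⁻ ω, ENNReal.ofReal (h (Y ω) - c) ∂P = ∞ by simp [this]
    have hmeas : AEStronglyMeasurable (fun ω => h (Y ω) - c) P :=
      ((continuousOn_univ.1 (hh.continuousOn isOpen_univ)).comp_aestronglyMeasurable
        hY.aestronglyMeasurable).sub aestronglyMeasurable_const
    by_contra hfin
    refine hhY ?_
    have := (lintegral_ofReal_ne_top_iff_integrable hmeas
      (ae_of_all _ fun ω => sub_nonneg.2 (hc _))).1 hfin
    simpa [Function.comp_def, sub_eq_add_neg, integrable_add_const_iff] using this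

theorem ConvexOrderLE.affine_add_mul_of_indepFun {Ω : Type*} [MeasurableSpace Ω] {P : Measure Ω}
    [IsProbabilityMeasure P] {S₁ S₂ W : Ω → ℝ} (hS : ConvexOrderLE P S₁ S₂) (A : ℝ →ᵃ[ℝ] ℝ)
    {σ : ℝ → ℝ} (hσ : ConvexOn ℝ univ σ) (hσ₀ : ∀ s, 0 ≤ σ s) (hσm : Measurable σ)
    (hS₁ : Measurable S₁) (hS₂ : Measurable S₂) (hW : Measurable W) (hS₁W : IndepFun S₁ W P)
    (hS₂W : IndepFun S₂ W P) {ν : Measure ℝ} [ν.IsNegInvariant] (hlaw : P.map W = ν)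
    (hν : Integrable id ν) :
    ConvexOrderLE P (fun ω => A (S₁ ω) + σ (S₁ ω) * W ω) (fun ω => A (S₂ ω) + σ (S₂ ω) * W ω) := by
  subst hlaw
  have hAm : Measurable A := A.continuous_of_finiteDimensional.measurable
  intro h hh c hc
  obtain ⟨g, hg, hgconv, hglip, hgc, hgh, hlim⟩ := hh.exists_lipschitz_tendsto hc
  refine lintegral_ofReal_sub_le_of_tendsto (by fun_prop) hg
    (fun n => (hglip n).choose_spec.continuous) hgh hlim fun n => ?_
  obtain ⟨K, hK⟩ := hglip n
  have hint (x y : ℝ) : Integrable (fun w => g n (x + y * w)) (P.map W) :=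
    hK.integrable_comp ((integrable_const x).add (hν.const_mul y))
  have hF : Measurable (Function.uncurry fun s w => g n (A s + σ s * w)) :=
    hK.continuous.measurable.comp (by fun_prop)
  have hmean (s : ℝ) : c ≤ ∫ w, g n (A s + σ s * w) ∂(P.map W) := by
    have := Measure.isProbabilityMeasure_map (μ := P) hW.aemeasurable
    simpa using integral_mono (integrable_const c) (hint _ _) fun w => hgc n _
  rw [hS₁W.lintegral_ofReal_sub_comp hS₁ hW hF (fun s => hint _ _) (fun s w => hgc n _),
    hS₂W.lintegral_ofReal_sub_comp hS₂ hW hF (fun s => hint _ _) (fun s w => hgc n _)]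
  exact hS _ ((hgconv n).integral_comp_affine_add_mul A hσ hσ₀ hint) c hmean

theorem euler_maruyama_step_convex_order_general {Ω : Type*} [MeasureSpace Ω]
    [IsProbabilityMeasure (ℙ : Measure Ω)]
    (θ a Δ μ : ℝ)
    (S₁ S₂ W : Ω → ℝ)
    (hS₁ : Measurable S₁) (hS₂ : Measurable S₂) (hW : Measurable W)
    (hS₂int : Integrable S₂ ℙ)
    -- martingale coupling: `E[S₂ | S₁] = S₁` a.s.
    (hmart : ℙ[S₂ | MeasurableSpace.comap S₁ Real.measurableSpace] =ᵐ[ℙ] S₁)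
    -- `W` is centered Gaussian with variance `Δ` …
    (hgauss : Measure.map W ℙ = gaussianReal 0 Δ.toNNReal)
    -- … and independent of `(S₁, S₂)`
    (hindep : IndepFun (fun ω => (S₁ ω, S₂ ω)) W ℙ) :
    -- for every convex `h : ℝ → ℝ` bounded below (lower bound `c`), the expectations
    -- (well-defined in `(−∞, ∞]`, encoded by shifting by `c` and using `∫⁻`) are ordered
    ∀ (h : ℝ → ℝ), ConvexOn ℝ Set.univ h → ∀ c : ℝ, (∀ x, c ≤ h x) →
      ∫⁻ ω, ENNReal.ofReal
          (h (S₁ ω + Δ * (-θ * (S₁ ω - μ)) +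
            Real.sqrt (2 * θ * a * ((S₁ ω) ^ 2 + 1)) * W ω) - c) ∂ℙ ≤
        ∫⁻ ω, ENNReal.ofReal
          (h (S₂ ω + Δ * (-θ * (S₂ ω - μ)) +
            Real.sqrt (2 * θ * a * ((S₂ ω) ^ 2 + 1)) * W ω) - c) ∂ℙ := by
  let A : ℝ →ᵃ[ℝ] ℝ :=
    ⟨fun s => s + Δ * (-θ * (s - μ)), (1 - Δ * θ) • LinearMap.id, fun p v => by simp; ring⟩
  exact (convexOrderLE_of_condExp_ae_eq hS₁.comap_le hS₂int hmart).affine_add_mul_of_indepFun A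
    (convexOn_sqrt_mul_sq_add_one (2 * θ * a)) (fun _ => Real.sqrt_nonneg _) (by fun_prop)
    hS₁ hS₂ hW (hindep.comp measurable_fst measurable_id)
    (hindep.comp measurable_snd measurable_id) hgauss
    (memLp_one_iff_integrable.1 (memLp_id_gaussianReal 1))

theorem euler_maruyama_step_convex_order {Ω : Type*} [MeasureSpace Ω]
    [IsProbabilityMeasure (ℙ : Measure Ω)]
    (θ a Δ μ : ℝ) (hθ : 0 < θ) (ha : 0 < a) (hΔ : 0 < Δ)
    (S₁ S₂ W : Ω → ℝ)
    (hS₁ : Measurable S₁) (hS₂ : Measurable S₂) (hW : Measurable W)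
    (hS₁int : Integrable S₁ ℙ) (hS₂int : Integrable S₂ ℙ)
    -- martingale coupling: `E[S₂ | S₁] = S₁` a.s.
    (hmart : ℙ[S₂ | MeasurableSpace.comap S₁ Real.measurableSpace] =ᵐ[ℙ] S₁)
    -- `W` is centered Gaussian with variance `Δ` …
    (hgauss : Measure.map W ℙ = gaussianReal 0 Δ.toNNReal)
    -- … and independent of `(S₁, S₂)`
    (hindep : IndepFun (fun ω => (S₁ ω, S₂ ω)) W ℙ) :
    -- for every convex `h : ℝ → ℝ` bounded below (lower bound `c`), the expectations
    -- (well-defined in `(−∞, ∞]`, encoded by shifting by `c` and using `∫⁻`) are ordered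
    ∀ (h : ℝ → ℝ), ConvexOn ℝ Set.univ h → ∀ c : ℝ, (∀ x, c ≤ h x) →
      ∫⁻ ω, ENNReal.ofReal
          (h (S₁ ω + Δ * (-θ * (S₁ ω - μ)) +
            Real.sqrt (2 * θ * a * ((S₁ ω) ^ 2 + 1)) * W ω) - c) ∂ℙ ≤
        ∫⁻ ω, ENNReal.ofReal
          (h (S₂ ω + Δ * (-θ * (S₂ ω - μ)) +
            Real.sqrt (2 * θ * a * ((S₂ ω) ^ 2 + 1)) * W ω) - c) ∂ℙ :=
  euler_maruyama_step_convex_order_general θ a Δ μ S₁ S₂ W hS₁ hS₂ hW hS₂int hmart hgauss hindep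
end
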